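/- arXiv:1402.5536 — 8 statements merged into one kernel-verified Lean document; each statement's English description precedes it below -/
import Mathlib

section
/- Edges of the Farey graph do not cross: if v₁ > v₂ > v₃ > v₄ are rational numbers, then it is impossible that both d(v₁,v₃) = 1 and d(v₂,v₄) = 1, where d is the Farey distance. -/
/-!
Write `D(x, y) = x.num · y.den − y.num · x.den`, so that `d = |D|` and `D(x, y) > 0` when `x > y`.
For `v₁ > v₂ > v₃ > v₄` the Plücker relation
`D(v₁,v₃) D(v₂,v₄) = D(v₁,v₂) D(v₃,v₄) + D(v₁,v₄) D(v₂,v₃)` writes `d(v₁,v₃) d(v₂,v₄)` as a sum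
of two positive integers, so it is at least `2`.
-/

/-- The Farey distance of two rationals (written in lowest terms):
`d(x,y) = |x.num · y.den − y.num · x.den|`. -/
def fareyDist (x y : ℚ) : ℕ := (x.num * (y.den : ℤ) - y.num * (x.den : ℤ)).natAbs

def fareyDet (x y : ℚ) : ℤ := x.num * (y.den : ℤ) - y.num * (x.den : ℤ)

theorem fareyDist_eq_natAbs_fareyDet (x y : ℚ) : fareyDist x y = (fareyDet x y).natAbs := rfl

theorem fareyDet_pos {x y : ℚ} (h : y < x) : 0 < fareyDet x y := by
  rw [Rat.lt_iff] at h
  unfold fareyDet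
  omega

theorem fareyDet_mul_fareyDet (a b c d : ℚ) :
    fareyDet a c * fareyDet b d = fareyDet a b * fareyDet c d + fareyDet a d * fareyDet b c := by
  unfold fareyDet
  ring

theorem two_le_fareyDist_mul_fareyDist {v₁ v₂ v₃ v₄ : ℚ} (h12 : v₂ < v₁) (h23 : v₃ < v₂)
    (h34 : v₄ < v₃) : 2 ≤ fareyDist v₁ v₃ * fareyDist v₂ v₄ := by
  have h13 := h23.trans h12
  rw [fareyDist_eq_natAbs_fareyDet, fareyDist_eq_natAbs_fareyDet, ← Int.natAbs_mul,
    fareyDet_mul_fareyDet]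
  have h12_34 := mul_pos (fareyDet_pos h12) (fareyDet_pos h34)
  have h14_23 := mul_pos (fareyDet_pos (h34.trans h13)) (fareyDet_pos h23)
  omega

/-- Edges of the Farey graph do not cross: for rationals `v₁ > v₂ > v₃ > v₄` it is
impossible that both `d(v₁,v₃) = 1` and `d(v₂,v₄) = 1`. -/
theorem stmt2 (v₁ v₂ v₃ v₄ : ℚ) (h12 : v₂ < v₁) (h23 : v₃ < v₂) (h34 : v₄ < v₃) :
    ¬(fareyDist v₁ v₃ = 1 ∧ fareyDist v₂ v₄ = 1) := by
  rintro ⟨h13, h24⟩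
  have := two_le_fareyDist_mul_fareyDist h12 h23 h34
  rw [h13, h24] at this
  omega
end

section
/- Any two consecutive numbers of a Farey series are joined by an edge of the Farey graph: if a/b > c/d are rationals in lowest terms lying in [0,1] with b ≤ N and d ≤ N, and no rational with denominator (in lowest terms) at most N lies strictly between c/d and a/b, then a·d − b·c = 1. -/
/-!
Since `y.num` and `y.den` are coprime, the solutions `(p, q)` of `p * y.den - y.num * q = 1` form
a single progression `q ≡ q₀ [ZMOD y.den]`, so one of them has `N - y.den < q ≤ N`; the fraction
`z = p / q` is then in lowest terms, lies above `y` and has denominator at most `N`, hence `x ≤ z`.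
If `y < x < z`, the unimodular relation between `y` and `z` writes `x.den` as
`q * (x.num * y.den - y.num * x.den) + y.den * (p * x.den - x.num * q) ≥ q + y.den > N`,
which is impossible; so `x = z`.
-/

theorem Int.exists_mul_sub_mul_eq_one_of_isCoprime {c d : ℤ} (h : IsCoprime c d) (hd : 0 < d)
    (N : ℤ) : ∃ p q : ℤ, p * d - c * q = 1 ∧ N - d < q ∧ q ≤ N := by
  obtain ⟨u, v, huv⟩ := h
  have hmod := Int.emod_def (N + u) d
  have hlo := Int.emod_nonneg (N + u) hd.ne'
  have hhi := Int.emod_lt_of_pos (N + u) hd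
  refine ⟨v + c * ((N + u) / d), -u + d * ((N + u) / d), by linear_combination huv, ?_, ?_⟩ <;>
    linarith

namespace Rat

theorem exists_num_den_eq {p q : ℤ} (hq : 0 < q) (h : IsCoprime p q) :
    ∃ z : ℚ, z.num = p ∧ (z.den : ℤ) = q := by
  have hpq : Nat.Coprime p.natAbs q.natAbs := Int.isCoprime_iff_gcd_eq_one.mp h
  exact ⟨p / q, num_div_eq_of_coprime hq hpq, den_div_eq_of_coprime hq hpq⟩

theorem exists_den_le_lt_add_den_and_num_mul_den_sub_eq_one (y : ℚ) {N : ℕ} (hy : y.den ≤ N) :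
    ∃ z : ℚ, z.den ≤ N ∧ N < y.den + z.den ∧ z.num * y.den - y.num * z.den = 1 := by
  have hcop : IsCoprime y.num y.den := Int.isCoprime_iff_gcd_eq_one.mpr y.reduced
  obtain ⟨p, q, hdet, hlo, hhi⟩ :=
    Int.exists_mul_sub_mul_eq_one_of_isCoprime hcop (by exact_mod_cast y.pos) N
  have hq : 0 < q := by omega
  obtain ⟨z, rfl, hz⟩ := exists_num_den_eq (p := p) hq ⟨y.den, -y.num, by linear_combination hdet⟩
  exact ⟨z, by omega, by omega, by rw [hz]; exact hdet⟩

theorem add_den_le_den_of_lt_of_lt {x y z : ℚ} (hyz : z.num * y.den - y.num * z.den = 1)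
    (hyx : y < x) (hxz : x < z) : y.den + z.den ≤ x.den := by
  have h₁ := (Rat.lt_iff y x).mp hyx
  have h₂ := (Rat.lt_iff x z).mp hxz
  have hden : (x.den : ℤ) = z.den * (x.num * y.den - y.num * x.den) +
      y.den * (z.num * x.den - x.num * z.den) := by
    linear_combination (-(x.den : ℤ)) * hyz
  have : (y.den + z.den : ℤ) ≤ x.den := by
    rw [hden]
    nlinarith [y.pos, z.pos]
  exact_mod_cast this

end Rat

theorem stmt3_general (N : ℕ) (x y : ℚ) (hxy : y < x)
    (hxN : x.den ≤ N) (hyN : y.den ≤ N)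
    (hcons : ∀ z : ℚ, z.den ≤ N → ¬(y < z ∧ z < x)) :
    x.num * (y.den : ℤ) - y.num * (x.den : ℤ) = 1 := by
  obtain ⟨z, hzN, hNz, hdet⟩ := Rat.exists_den_le_lt_add_den_and_num_mul_den_sub_eq_one y hyN
  have hyz : y < z := (Rat.lt_iff y z).mpr (by linarith)
  rcases (not_lt.mp fun h => hcons z hzN ⟨hyz, h⟩ : x ≤ z).eq_or_lt with rfl | hxz
  · exact hdet
  · have := Rat.add_den_le_den_of_lt_of_lt hdet hxy hxz
    omega

/-- Any two consecutive numbers of a Farey series are joined by an edge of the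
Farey graph: if `x > y` are rationals in `[0,1]` with denominators (in lowest terms)
at most `N`, and no rational with denominator at most `N` lies strictly between them,
then `x.num · y.den − y.num · x.den = 1`. -/
theorem stmt3 (N : ℕ) (x y : ℚ) (hxy : y < x) (hy0 : 0 ≤ y) (hx1 : x ≤ 1)
    (hxN : x.den ≤ N) (hyN : y.den ≤ N)
    (hcons : ∀ z : ℚ, z.den ≤ N → ¬(y < z ∧ z < x)) :
    x.num * (y.den : ℤ) - y.num * (x.den : ℤ) = 1 :=
  stmt3_general N x y hxy hxN hyN hcons
end

section
/- Every Farey series forms a triangulated polygon in the Farey graph; concretely, for N ≥ 2, every new term of the Farey series of order N forms a triangle with its two neighbors: if k/N is in lowest terms with 0 < k < N, and p₁/q₁ > k/N > p₂/q₂ are the elements of the Farey series of order N immediately adjacent to k/N (i.e. p₁/q₁ and k/N are consecutive, and k/N and p₂/q₂ are consecutive in the series of order N), then q₁ < N, q₂ < N, d(p₁/q₁, p₂/q₂) = 1, and k = p₁ + p₂, N = q₁ + q₂, so that {p₁/q₁, k/N, p₂/q₂} is a 3-cycle in the Farey graph. -/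
/-!
If `x = k/N` is in lowest terms, Bézout gives fractions `c/d` with `d < N` and `cN - kd = ±1`,
which lie in the Farey series of order `N`. A rational strictly between `a/b < c/d` with
`cb - ad = 1` has denominator at least `b + d`, so nothing of the series lies between `k/N` and
these fractions: they are the two neighbours of `k/N`. Adding the relations `p₁N - kq₁ = 1` and
`kq₂ - p₂N = 1` gives `N (p₁q₂ - p₂q₁) = q₁ + q₂ < 2N`, which forces `p₁q₂ - p₂q₁ = 1`, and then
`k/N` is the mediant of its neighbours.
-/

/-- Membership in the Farey series of order `N`: a rational in `[0,1]` whose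
denominator in lowest terms is at most `N`. -/
def InFareySeries (N : ℕ) (z : ℚ) : Prop := 0 ≤ z ∧ z ≤ 1 ∧ z.den ≤ N

theorem Int.exists_mul_sub_mul_eq_of_isUnit {k N ε : ℤ} (hk : 0 < k) (hkN : k < N)
    (hcop : IsCoprime k N) (hε : IsUnit ε) :
    ∃ c d : ℤ, 0 < d ∧ d < N ∧ 0 ≤ c ∧ c ≤ d ∧ c * N - k * d = ε := by
  obtain ⟨u, v, huv⟩ := hcop
  have hN : 0 < N := hk.trans hkN
  -- `u` inverts `k` modulo `N`, so `d ≡ -ε u` makes `k d + ε` divisible by `N`.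
  obtain ⟨c, d, hd0, hdN, hrel⟩ : ∃ c d : ℤ, 0 ≤ d ∧ d < N ∧ c * N - k * d = ε :=
    ⟨ε * v - k * (-ε * u / N), -ε * u % N, Int.emod_nonneg _ hN.ne', Int.emod_lt_of_pos _ hN,
      by linear_combination (-k) * Int.emod_def (-ε * u) N + ε * huv⟩
  have hε_bounds : -1 ≤ ε ∧ ε ≤ 1 := by rcases Int.isUnit_iff.mp hε with rfl | rfl <;> omega
  have hd_pos : 0 < d := by
    refine hd0.lt_of_ne fun h => ?_
    rw [← h, mul_zero, sub_zero] at hrel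
    have := Int.isUnit_iff.mp (isUnit_of_mul_isUnit_right (hrel ▸ hε))
    omega
  have hkd : k * d ≤ (N - 1) * d := mul_le_mul_of_nonneg_right (by omega) hd0
  refine ⟨c, d, hd_pos, hdN, ?_, ?_, hrel⟩
  · refine nonneg_of_mul_nonneg_left ?_ hN
    nlinarith
  · refine le_of_mul_le_mul_right ?_ hN
    nlinarith

theorem Rat.add_den_le_den_of_lt_of_lt_s4 {x y z : ℚ} (hadj : y.num * x.den - x.num * y.den = 1)
    (hxz : x < z) (hzy : z < y) : x.den + y.den ≤ z.den := by
  rw [Rat.lt_iff] at hxz hzy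
  have hden : (z.den : ℤ) =
      x.den * (y.num * z.den - z.num * y.den) + y.den * (z.num * x.den - x.num * z.den) := by
    linear_combination -(z.den : ℤ) * hadj
  zify
  nlinarith [x.den_pos, y.den_pos]

theorem exists_inFareySeries_num_mul_den_sub_eq {x : ℚ} (hx0 : 0 < x) (hx1 : x < 1) {ε : ℤ}
    (hε : IsUnit ε) :
    ∃ y, InFareySeries x.den y ∧ y.den < x.den ∧ y.num * x.den - x.num * y.den = ε := by
  obtain ⟨c, d, hd, hdN, hc, hcd, hrel⟩ := Int.exists_mul_sub_mul_eq_of_isUnit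
    (Rat.num_pos.mpr hx0) (Rat.num_lt_denom_iff.mpr hx1) (Rat.isCoprime_num_den x) hε
  have hcop : Nat.Coprime c.natAbs d.natAbs :=
    Int.isCoprime_iff_gcd_eq_one.mp
      ⟨ε * x.den, -ε * x.num, by linear_combination ε * hrel + Int.isUnit_mul_self hε⟩
  have hnum : ((c : ℚ) / d).num = c := Rat.num_div_eq_of_coprime hd hcop
  have hden : (((c : ℚ) / d).den : ℤ) = d := Rat.den_div_eq_of_coprime hd hcop
  refine ⟨c / d, ⟨by positivity, div_le_one_of_le₀ (by exact_mod_cast hcd) (by positivity), ?_⟩,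
    ?_, by rw [hnum, hden]; exact hrel⟩
  all_goals omega

theorem farey_succ_unimodular {x r : ℚ} (hx0 : 0 < x) (hx1 : x < 1)
    (hr : InFareySeries x.den r) (hxr : x < r)
    (hcons : ∀ z, InFareySeries x.den z → ¬(x < z ∧ z < r)) :
    r.den < x.den ∧ r.num * x.den - x.num * r.den = 1 := by
  obtain ⟨y, hy, hy_den, hadj⟩ := exists_inFareySeries_num_mul_den_sub_eq hx0 hx1 isUnit_one
  have hxy : x < y := by rw [Rat.lt_iff]; linarith
  have hry : r ≤ y := not_lt.mp fun h => hcons y hy ⟨hxy, h⟩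
  obtain rfl : r = y := hry.eq_of_not_lt fun h =>
    ((Rat.add_den_le_den_of_lt_of_lt_s4 hadj hxr h).trans hr.2.2).not_gt
      (Nat.lt_add_of_pos_right y.den_pos)
  exact ⟨hy_den, hadj⟩

theorem farey_pred_unimodular {x s : ℚ} (hx0 : 0 < x) (hx1 : x < 1)
    (hs : InFareySeries x.den s) (hsx : s < x)
    (hcons : ∀ z, InFareySeries x.den z → ¬(s < z ∧ z < x)) :
    s.den < x.den ∧ x.num * s.den - s.num * x.den = 1 := by
  obtain ⟨y, hy, hy_den, hrel⟩ :=
    exists_inFareySeries_num_mul_den_sub_eq hx0 hx1 isUnit_one.neg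
  have hadj : x.num * y.den - y.num * x.den = 1 := by linarith
  have hyx : y < x := by rw [Rat.lt_iff]; linarith
  have hys : y ≤ s := not_lt.mp fun h => hcons y hy ⟨h, hyx⟩
  obtain rfl : s = y := (hys.eq_of_not_lt fun h =>
    ((Rat.add_den_le_den_of_lt_of_lt_s4 hadj h hsx).trans hs.2.2).not_gt
      (Nat.lt_add_of_pos_left y.den_pos)).symm
  exact ⟨hy_den, hadj⟩

theorem mediant_of_unimodular {k N p₁ q₁ p₂ q₂ : ℤ} (hq₁ : 0 < q₁) (hq₂ : 0 < q₂)
    (hq₁N : q₁ < N) (hq₂N : q₂ < N) (h₁ : p₁ * N - k * q₁ = 1) (h₂ : k * q₂ - p₂ * N = 1) :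
    p₁ * q₂ - p₂ * q₁ = 1 ∧ k = p₁ + p₂ ∧ N = q₁ + q₂ := by
  have hN : 0 < N := hq₁.trans hq₁N
  have hsum : N * (p₁ * q₂ - p₂ * q₁) = q₁ + q₂ := by linear_combination q₂ * h₁ + q₁ * h₂
  have hdet_pos : 0 < p₁ * q₂ - p₂ * q₁ := pos_of_mul_pos_right (by omega) hN.le
  have hdet_lt : p₁ * q₂ - p₂ * q₁ < 2 := lt_of_mul_lt_mul_left (by omega) hN.le
  have hdet : p₁ * q₂ - p₂ * q₁ = 1 := by omega
  have hN_eq : N = q₁ + q₂ := by rw [← hsum, hdet, mul_one]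
  refine ⟨hdet, mul_left_cancel₀ hN.ne' ?_, hN_eq⟩
  linear_combination h₂ - h₁ + k * hN_eq

theorem Rat.num_den_natCast_div_of_coprime {k N : ℕ} (hN : 0 < N) (hcop : k.Coprime N) :
    ((k : ℚ) / N).num = k ∧ ((k : ℚ) / N).den = N := by
  have hcop' : Nat.Coprime (k : ℤ).natAbs (N : ℤ).natAbs := by simpa using hcop
  have hden := Rat.den_div_eq_of_coprime (by omega) hcop'
  push_cast at hden
  exact ⟨by simpa using Rat.num_div_eq_of_coprime (by omega) hcop', by exact_mod_cast hden⟩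

/-- Every new term `k/N` of the Farey series of order `N` forms a triangle with its
two neighbors `p₁/q₁ > k/N > p₂/q₂`: the neighbors have denominators `< N`, are joined
by a Farey edge, and `k/N` is their mediant. -/
theorem stmt4 (N k : ℕ) (hk0 : 0 < k) (hkN : k < N) (hcop : Nat.Coprime k N)
    (r s : ℚ) (hr : InFareySeries N r) (hs : InFareySeries N s)
    (hrx : (k : ℚ) / (N : ℚ) < r) (hxs : s < (k : ℚ) / (N : ℚ))
    (hconsr : ∀ z : ℚ, InFareySeries N z → ¬((k : ℚ) / (N : ℚ) < z ∧ z < r))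
    (hconss : ∀ z : ℚ, InFareySeries N z → ¬(s < z ∧ z < (k : ℚ) / (N : ℚ))) :
    r.den < N ∧ s.den < N ∧
    r.num * (s.den : ℤ) - s.num * (r.den : ℤ) = 1 ∧
    (k : ℤ) = r.num + s.num ∧ (N : ℤ) = (r.den : ℤ) + (s.den : ℤ) := by
  obtain ⟨hnum, hden⟩ := Rat.num_den_natCast_div_of_coprime (hk0.trans hkN) hcop
  set x : ℚ := k / N
  have hx0 : 0 < x := div_pos (by exact_mod_cast hk0) (by exact_mod_cast hk0.trans hkN)
  have hx1 : x < 1 := (div_lt_one (by exact_mod_cast hk0.trans hkN)).mpr (by exact_mod_cast hkN)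
  rw [← hden] at hr hs hconsr hconss ⊢
  obtain ⟨hr_den, hr_adj⟩ := farey_succ_unimodular hx0 hx1 hr hrx hconsr
  obtain ⟨hs_den, hs_adj⟩ := farey_pred_unimodular hx0 hx1 hs hxs hconss
  rw [hnum] at hr_adj hs_adj
  exact ⟨hr_den, hs_den, mediant_of_unimodular (by exact_mod_cast r.den_pos)
    (by exact_mod_cast s.den_pos) (by exact_mod_cast hr_den) (by exact_mod_cast hs_den)
    hr_adj hs_adj⟩
end

section
/- In a Farey n-gon, the Farey distance d(v_{i−1}, v_{i+1}) equals the number of triangles of the triangulation incident at v_i; concretely: if (v_0, …, v_{n−1}) is a Farey n-gon and 1 ≤ i ≤ n−2, then det(v_{i−1}, v_{i+1}) = (the number of indices j with 0 ≤ j ≤ n−1, j ≠ i, and |det(v_i, v_j)| = 1) − 1. -/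
/-- `fdet (a,b) (c,d) = a*d - b*c`. -/
def fdet (u v : ℤ × ℤ) : ℤ := u.1 * v.2 - u.2 * v.1

/-- A primitive vector `(a,b) ∈ ℤ²`: `gcd(a,b) = 1`, `b ≥ 0`, and `a = 1` whenever `b = 0`. -/
def IsPrimitive (u : ℤ × ℤ) : Prop := Int.gcd u.1 u.2 = 1 ∧ 0 ≤ u.2 ∧ (u.2 = 0 → u.1 = 1)

/-- A Farey `n`-gon: primitive vectors `v 0, …, v (n-1)` with `det(v i, v j) > 0`
for `i < j < n`, `det(v i, v (i+1)) = 1` for `i + 1 < n`, and `det(v 0, v (n-1)) = 1`. -/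
def IsFareyPolygon (n : ℕ) (v : ℕ → ℤ × ℤ) : Prop :=
  (∀ i < n, IsPrimitive (v i)) ∧
  (∀ i j, i < j → j < n → 0 < fdet (v i) (v j)) ∧
  (∀ i, i + 1 < n → fdet (v i) (v (i + 1)) = 1) ∧
  fdet (v 0) (v (n - 1)) = 1


/-! Put `w = v i`. Going around the polygon from `v (i + 1)` and negating the vertices that wrap
past `v (n - 1)` gives a fan `u 0 = v (i + 1), …, u m = -v (i - 1)` with `det(w, u j) > 0` and
`det(u j, u (j + 1)) = 1`. With `c j = det(w, u j)` and `e j = det(u 0, u j)` the Plücker relation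
gives `c j * e (j + 1) - c (j + 1) * e j = 1`: the fractions `e j / c j` are Farey neighbours, so no
integer lies strictly between consecutive ones and `⌊e j / c j⌋` increases by one exactly when
`c (j + 1) = 1`. Telescoping from `⌊e 0 / c 0⌋ = 0` to `e m / c m = det(v (i - 1), v (i + 1))`
counts the Farey neighbours of `w` among the vertices. -/

open Finset

theorem fdet_neg_left (u v : ℤ × ℤ) : fdet (-u) v = -fdet u v := by
  simp only [fdet, Prod.fst_neg, Prod.snd_neg]; ring

theorem fdet_neg_right (u v : ℤ × ℤ) : fdet u (-v) = -fdet u v := by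
  simp only [fdet, Prod.fst_neg, Prod.snd_neg]; ring

theorem fdet_swap (u v : ℤ × ℤ) : fdet v u = -fdet u v := by
  simp only [fdet]; ring

theorem fdet_self (u : ℤ × ℤ) : fdet u u = 0 := by
  simp only [fdet]; ring

theorem fdet_plucker (a b x y : ℤ × ℤ) :
    fdet a x * fdet b y - fdet a y * fdet b x = fdet a b * fdet x y := by
  simp only [fdet]; ring

theorem ediv_eq_ediv_add_ite_of_mul_sub_mul_eq_one {c e c' e' : ℤ} (hc : 0 < c) (hc' : 0 < c')
    (h : c * e' - c' * e = 1) : e' / c' = e / c + if c' = 1 then 1 else 0 := by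
  obtain ⟨hkl, hku⟩ := (Int.ediv_eq_iff_of_pos hc).1 (rfl : e / c = e / c)
  rw [Int.ediv_eq_iff_of_pos hc']
  split_ifs with hc'1
  · subst hc'1
    constructor <;> nlinarith
  · have : 2 ≤ c' := by omega
    constructor <;> nlinarith

theorem fdet_fan_ends_eq_card_sub_one (o : ℤ × ℤ) (u : ℕ → ℤ × ℤ) (m : ℕ)
    (hpos : ∀ j ≤ m, 0 < fdet o (u j)) (hstep : ∀ j < m, fdet (u j) (u (j + 1)) = 1)
    (h0 : fdet o (u 0) = 1) (hm : fdet o (u m) = 1) :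
    fdet (u 0) (u m) = #{j ∈ range (m + 1) | fdet o (u j) = 1} - 1 := by
  have hquot : ∀ j < m, fdet (u 0) (u (j + 1)) / fdet o (u (j + 1)) =
      fdet (u 0) (u j) / fdet o (u j) + if fdet o (u (j + 1)) = 1 then 1 else 0 :=
    fun j hj => ediv_eq_ediv_add_ite_of_mul_sub_mul_eq_one (hpos j hj.le) (hpos (j + 1) hj)
      (by rw [fdet_plucker, h0, hstep j hj, one_mul])
  calc fdet (u 0) (u m)
      = fdet (u 0) (u m) / fdet o (u m) - fdet (u 0) (u 0) / fdet o (u 0) := by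
        rw [hm, h0, fdet_self, Int.ediv_one, Int.zero_ediv, sub_zero]
    _ = ∑ j ∈ range m, if fdet o (u (j + 1)) = 1 then 1 else 0 := by
        rw [← sum_range_sub fun j => fdet (u 0) (u j) / fdet o (u j)]
        exact sum_congr rfl fun j hj => by rw [hquot j (mem_range.1 hj)]; ring
    _ = #{j ∈ range (m + 1) | fdet o (u j) = 1} - 1 := by
        rw [← sum_boole, sum_range_succ', if_pos h0, add_sub_cancel_right]

/-- `(i + 1 + j) % n`, for `i < n` and `j < n - 1`. -/
def cycIdx (n i j : ℕ) : ℕ := if i + 1 + j < n then i + 1 + j else i + 1 + j - n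

def fan (n i : ℕ) (v : ℕ → ℤ × ℤ) (j : ℕ) : ℤ × ℤ :=
  if i + 1 + j < n then v (i + 1 + j) else -v (i + 1 + j - n)

theorem card_filter_cycIdx (p : ℕ → Prop) [DecidablePred p] {n i : ℕ} (hi : i < n) :
    #{j ∈ range (n - 1) | p (cycIdx n i j)} = #{k ∈ range n | k ≠ i ∧ p k} := by
  set back : ℕ → ℕ := fun k => if i < k then k - i - 1 else k + n - i - 1
  have hcyc : ∀ j < n - 1, cycIdx n i j < n ∧ cycIdx n i j ≠ i ∧ back (cycIdx n i j) = j := by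
    intro j hj
    simp only [back, cycIdx]
    split_ifs <;> omega
  have hback : ∀ k < n, k ≠ i → back k < n - 1 ∧ cycIdx n i (back k) = k := by
    intro k hk hki
    simp only [back, cycIdx]
    split_ifs <;> omega
  refine card_nbij' (cycIdx n i) back ?_ ?_ ?_ ?_ <;> intro j hj <;>
    simp only [coe_filter, mem_range, Set.mem_ofPred_eq] at hj ⊢
  · exact ⟨(hcyc j hj.1).1, (hcyc j hj.1).2.1, hj.2⟩
  · obtain ⟨hlt, hj'⟩ := hback j hj.1 hj.2.1
    exact ⟨hlt, by rw [hj']; exact hj.2.2⟩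
  · exact (hcyc j hj.1).2.2
  · exact (hback j hj.1 hj.2.1).2

theorem natAbs_fdet_fan (x : ℤ × ℤ) (n i : ℕ) (v : ℕ → ℤ × ℤ) (j : ℕ) :
    (fdet x (fan n i v j)).natAbs = (fdet x (v (cycIdx n i j))).natAbs := by
  unfold fan cycIdx
  split_ifs <;> simp only [fdet_neg_right, Int.natAbs_neg]

theorem fan_zero {n i : ℕ} (v : ℕ → ℤ × ℤ) (hi : i + 1 < n) : fan n i v 0 = v (i + 1) := by
  simp [fan, hi]

theorem fan_last {n i : ℕ} (v : ℕ → ℤ × ℤ) (hi1 : 1 ≤ i) (hin : i < n) :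
    fan n i v (n - 2) = -v (i - 1) := by
  rw [fan, if_neg (by omega), show i + 1 + (n - 2) - n = i - 1 by omega]

namespace IsFareyPolygon

variable {n : ℕ} {v : ℕ → ℤ × ℤ}

theorem fdet_fan_pos (hv : IsFareyPolygon n v) {i j : ℕ} (hi : i < n) (hj : j < n - 1) :
    0 < fdet (v i) (fan n i v j) := by
  obtain ⟨-, hpos, -, -⟩ := hv
  unfold fan
  split_ifs with h
  · exact hpos i _ (by omega) h
  · rw [fdet_neg_right, ← fdet_swap]
    exact hpos _ i (by omega) hi

theorem fdet_fan_succ (hv : IsFareyPolygon n v) {i j : ℕ} (hi : i < n) (hj : j + 2 < n) :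
    fdet (fan n i v j) (fan n i v (j + 1)) = 1 := by
  obtain ⟨-, -, hstep, hclose⟩ := hv
  unfold fan
  rw [show i + 1 + (j + 1) = i + 1 + j + 1 by omega]
  split_ifs with h h' h'
  · exact hstep _ h'
  · rw [fdet_neg_right, ← fdet_swap, show i + 1 + j + 1 - n = 0 by omega,
      show i + 1 + j = n - 1 by omega, hclose]
  · omega
  · rw [fdet_neg_left, fdet_neg_right, neg_neg, show i + 1 + j + 1 - n = i + 1 + j - n + 1 by omega]
    exact hstep _ (by omega)

theorem card_fdet_fan_eq_one (hv : IsFareyPolygon n v) {i : ℕ} (hi : i < n) :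
    #{j ∈ range (n - 1) | fdet (v i) (fan n i v j) = 1} =
      #{k ∈ range n | k ≠ i ∧ (fdet (v i) (v k)).natAbs = 1} := by
  rw [← card_filter_cycIdx _ hi]
  refine congrArg card (filter_congr fun j hj => ?_)
  rw [← natAbs_fdet_fan]
  have := hv.fdet_fan_pos hi (mem_range.1 hj)
  omega

end IsFareyPolygon

theorem stmt6_general (n : ℕ) (v : ℕ → ℤ × ℤ) (hv : IsFareyPolygon n v)
    (i : ℕ) (hi1 : 1 ≤ i) (hi2 : i ≤ n - 2) :
    fdet (v (i - 1)) (v (i + 1)) =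
      (((Finset.range n).filter
          (fun j => j ≠ i ∧ (fdet (v i) (v j)).natAbs = 1)).card : ℤ) - 1 := by
  have hi : i < n := by omega
  have hstep := hv.2.2.1
  have hfan := fdet_fan_ends_eq_card_sub_one (v i) (fan n i v) (n - 2)
    (fun j hj => hv.fdet_fan_pos hi (by omega)) (fun j hj => hv.fdet_fan_succ hi (by omega))
    (by rw [fan_zero v (by omega)]; exact hstep i (by omega))
    (by rw [fan_last v hi1 hi, fdet_neg_right, ← fdet_swap, ← hstep (i - 1) (by omega),
      Nat.sub_add_cancel hi1])
  rwa [fan_zero v (by omega), fan_last v hi1 hi, fdet_neg_right, ← fdet_swap,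
    show n - 2 + 1 = n - 1 by omega, hv.card_fdet_fan_eq_one hi] at hfan

/-- In a Farey `n`-gon, the Farey distance `d(v_{i−1}, v_{i+1})` equals the number of
triangles of the triangulation incident at `v_i`, i.e. the number of vertices of the
polygon joined to `v_i` by a Farey edge, minus one. -/
theorem stmt6 (n : ℕ) (hn : 3 ≤ n) (v : ℕ → ℤ × ℤ) (hv : IsFareyPolygon n v)
    (i : ℕ) (hi1 : 1 ≤ i) (hi2 : i ≤ n - 2) :
    fdet (v (i - 1)) (v (i + 1)) =
      (((Finset.range n).filter
          (fun j => j ≠ i ∧ (fdet (v i) (v j)).natAbs = 1)).card : ℤ) - 1 :=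
  stmt6_general n v hv i hi1 hi2
end

section
/- An (n,m)-antiperiodic SL2-tiling that contains a positive m×n fundamental rectangle is tame: if n, m ≥ 1 and a : ℤ×ℤ → ℤ is an (n,m)-antiperiodic SL2-tiling with a positive fundamental rectangle, then every adjacent 3×3 minor of a vanishes. -/
/-- An SL2-tiling: every adjacent 2×2 minor equals 1. -/
def IsSL2Tiling (a : ℤ → ℤ → ℤ) : Prop :=
  ∀ i j : ℤ, a i j * a (i + 1) (j + 1) - a i (j + 1) * a (i + 1) j = 1

/-- An `(n,m)`-antiperiodic array: rows are `n`-antiperiodic, columns `m`-antiperiodic. -/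
def IsAntiperiodic (n m : ℕ) (a : ℤ → ℤ → ℤ) : Prop :=
  ∀ i j : ℤ, a i (j + (n : ℤ)) = -a i j ∧ a (i + (m : ℤ)) j = -a i j

/-- A positive `m × n` fundamental rectangle: `a i j > 0` for `0 ≤ i ≤ m-1`, `0 ≤ j ≤ n-1`. -/
def HasPosRect (n m : ℕ) (a : ℤ → ℤ → ℤ) : Prop :=
  ∀ i j : ℤ, 0 ≤ i → i ≤ (m : ℤ) - 1 → 0 ≤ j → j ≤ (n : ℤ) - 1 → 0 < a i j

/-- Tameness: every adjacent 3×3 minor vanishes. -/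
def IsTame (a : ℤ → ℤ → ℤ) : Prop :=
  ∀ i j : ℤ,
    (Matrix.of fun k l : Fin 3 => a (i + (k.val : ℤ)) (j + (l.val : ℤ))).det = 0


/-
All entries are nonzero: antiperiodicity makes `|a|` periodic in both directions, so every
`|a i j|` reappears in the positive fundamental rectangle. The Desnanot–Jacobi identity writes
the centre entry of a 3×3 window times its determinant as a difference of products of the four
adjacent 2×2 minors, which is `1 * 1 - 1 * 1 = 0`; dividing by the centre entry kills the minor.
-/

theorem Function.Periodic.map_emod {α : Type*} {f : ℤ → α} {c : ℤ} (hf : Function.Periodic f c)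
    (x : ℤ) : f (x % c) = f x := by
  rw [Int.emod_def, mul_comm]
  exact_mod_cast hf.sub_int_mul_eq (x / c)

theorem Matrix.mul_det_fin_three_eq_minors {R : Type*} [CommRing R]
    (M : Matrix (Fin 3) (Fin 3) R) :
    M 1 1 * M.det =
      (M 0 0 * M 1 1 - M 0 1 * M 1 0) * (M 1 1 * M 2 2 - M 1 2 * M 2 1) -
        (M 0 1 * M 1 2 - M 0 2 * M 1 1) * (M 1 0 * M 2 1 - M 1 1 * M 2 0) := by
  rw [Matrix.det_fin_three]
  ring

theorem IsAntiperiodic.abs_eq_abs_emod {n m : ℕ} {a : ℤ → ℤ → ℤ} (hAp : IsAntiperiodic n m a)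
    (i j : ℤ) : |a i j| = |a (i % m) (j % n)| := by
  have hrow : Function.Periodic (fun x => |a x j|) m := fun x => by simp [(hAp x j).2]
  have hcol : Function.Periodic (fun y => |a (i % m) y|) n := fun y => by simp [(hAp _ y).1]
  rw [← hrow.map_emod i, ← hcol.map_emod j]

theorem IsAntiperiodic.ne_zero_of_hasPosRect {n m : ℕ} (hn : 1 ≤ n) (hm : 1 ≤ m)
    {a : ℤ → ℤ → ℤ} (hAp : IsAntiperiodic n m a) (hPos : HasPosRect n m a) (i j : ℤ) :
    a i j ≠ 0 := by
  have hm' : (0 : ℤ) < m := by exact_mod_cast hm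
  have hn' : (0 : ℤ) < n := by exact_mod_cast hn
  have hrect : 0 < a (i % m) (j % n) :=
    hPos _ _ (Int.emod_nonneg i hm'.ne') (by linarith [Int.emod_lt_of_pos i hm'])
      (Int.emod_nonneg j hn'.ne') (by linarith [Int.emod_lt_of_pos j hn'])
  rw [← abs_pos, hAp.abs_eq_abs_emod]
  exact abs_pos.mpr hrect.ne'

theorem IsSL2Tiling.isTame_of_ne_zero {a : ℤ → ℤ → ℤ} (hSL : IsSL2Tiling a)
    (hne : ∀ i j, a i j ≠ 0) : IsTame a := by
  intro i j
  set M := Matrix.of fun k l : Fin 3 => a (i + (k.val : ℤ)) (j + (l.val : ℤ))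
  have hwindow : ∀ k l : Fin 2, M k.castSucc l.castSucc * M k.succ l.succ -
      M k.castSucc l.succ * M k.succ l.castSucc = 1 := by
    intro k l
    simpa [M, add_assoc] using hSL (i + k) (j + l)
  have hcentre : M 1 1 * M.det = 0 := by
    rw [Matrix.mul_det_fin_three_eq_minors]
    have h00 := hwindow 0 0
    have h01 := hwindow 0 1
    have h10 := hwindow 1 0
    have h11 := hwindow 1 1
    simp only [Fin.castSucc_zero, Fin.succ_zero_eq_one, Fin.castSucc_one, Fin.succ_one_eq_two]
      at h00 h01 h10 h11
    linear_combination (M 1 1 * M 2 2 - M 1 2 * M 2 1) * h00 + h11 -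
      (M 1 0 * M 2 1 - M 1 1 * M 2 0) * h01 - h10
  exact (mul_eq_zero.mp hcentre).resolve_left (hne _ _)

/-- An `(n,m)`-antiperiodic SL2-tiling containing a positive `m × n` fundamental
rectangle is tame. -/
theorem stmt9 (n m : ℕ) (hn : 1 ≤ n) (hm : 1 ≤ m) (a : ℤ → ℤ → ℤ)
    (hSL : IsSL2Tiling a) (hAp : IsAntiperiodic n m a) (hPos : HasPosRect n m a) :
    IsTame a :=
  hSL.isTame_of_ne_zero (hAp.ne_zero_of_hasPosRect hn hm hPos)
end

section
/- The set S of totally positive unimodular matrices is a semigroup: the set S of matrices [[a,b],[c,d]] in SL₂(ℤ) with 0 < a < b < d and 0 < a < c < d is closed under matrix multiplication. -/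
/-- Membership in the semigroup `S ⊂ SL₂(ℤ)` of totally positive unimodular matrices:
`0 < a < b < d` and `0 < a < c < d` for `M = [[a,b],[c,d]]`. -/
def InS (M : Matrix.SpecialLinearGroup (Fin 2) ℤ) : Prop :=
  0 < M.1 0 0 ∧ M.1 0 0 < M.1 0 1 ∧ M.1 0 1 < M.1 1 1 ∧
  M.1 0 0 < M.1 1 0 ∧ M.1 1 0 < M.1 1 1

/-!
Write `M = [[a,b],[c,d]]`. Membership in `S` says that every entry of `M` is positive, that the
second row dominates the first entrywise (`a < c`, `b < d`) and that the second column dominates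
the first entrywise (`a < b`, `c < d`). For a product `M * N` of positive matrices, the row
comparison is inherited from the rows of `M` and the column comparison from the columns of `N`,
so closure is a pure positivity argument.
-/

namespace Matrix

variable {l m n R : Type*} [Fintype m] [Nonempty m] [Semiring R] [PartialOrder R]
  [IsStrictOrderedRing R] {M : Matrix l m R} {N : Matrix m n R}

theorem mul_apply_pos {i : l} {j : n} (hM : ∀ k, 0 < M i k) (hN : ∀ k, 0 < N k j) :
    0 < (M * N) i j :=
  Finset.sum_pos (fun k _ => mul_pos (hM k) (hN k)) Finset.univ_nonempty

theorem mul_apply_lt_mul_apply_of_row_lt {i i' : l} {j : n} (hM : ∀ k, M i k < M i' k)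
    (hN : ∀ k, 0 < N k j) : (M * N) i j < (M * N) i' j :=
  Finset.sum_lt_sum_of_nonempty Finset.univ_nonempty
    fun k _ => mul_lt_mul_of_pos_right (hM k) (hN k)

theorem mul_apply_lt_mul_apply_of_col_lt {i : l} {j j' : n} (hM : ∀ k, 0 < M i k)
    (hN : ∀ k, N k j < N k j') : (M * N) i j < (M * N) i j' :=
  Finset.sum_lt_sum_of_nonempty Finset.univ_nonempty
    fun k _ => mul_lt_mul_of_pos_left (hN k) (hM k)

end Matrix

namespace InS

variable {M : Matrix.SpecialLinearGroup (Fin 2) ℤ}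

theorem entry_pos (h : InS M) (i j : Fin 2) : 0 < M.1 i j := by
  obtain ⟨ha, hab, hbd, hac, hcd⟩ := h
  fin_cases i <;> fin_cases j <;> simp only [Fin.zero_eta, Fin.mk_one] <;> omega

theorem row_lt (h : InS M) (k : Fin 2) : M.1 0 k < M.1 1 k := by
  obtain ⟨_, _, hbd, hac, _⟩ := h
  fin_cases k <;> simpa

theorem col_lt (h : InS M) (k : Fin 2) : M.1 k 0 < M.1 k 1 := by
  obtain ⟨_, hab, _, _, hcd⟩ := h
  fin_cases k <;> simpa

end InS

open Matrix in
/-- The set `S` of totally positive matrices in `SL₂(ℤ)` is a semigroup: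
it is closed under matrix multiplication. -/
theorem stmt10 (M N : Matrix.SpecialLinearGroup (Fin 2) ℤ)
    (hM : InS M) (hN : InS N) : InS (M * N) := by
  have hMN : (M * N).1 = M.1 * N.1 := rfl
  rw [InS, hMN]
  exact ⟨mul_apply_pos (hM.entry_pos 0) (hN.entry_pos · 0),
    mul_apply_lt_mul_apply_of_col_lt (hM.entry_pos 0) hN.col_lt,
    mul_apply_lt_mul_apply_of_row_lt hM.row_lt (hN.entry_pos · 1),
    mul_apply_lt_mul_apply_of_row_lt hM.row_lt (hN.entry_pos · 0),
    mul_apply_lt_mul_apply_of_col_lt (hM.entry_pos 1) hN.col_lt⟩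
end

section
/- The first two rows of an antiperiodic positive SL2-tiling form a Farey polygon: let n ≥ 3, m ≥ 2, and let a : ℤ×ℤ → ℤ be an (n,m)-antiperiodic SL2-tiling with positive fundamental rectangle. Then the vectors u_j = (a(0,j), a(1,j)) for j = 0, …, n−1 form a Farey n-gon: each u_j is primitive, det(u_i, u_j) > 0 for all 0 ≤ i < j ≤ n−1, det(u_j, u_{j+1}) = 1 for 0 ≤ j ≤ n−2, and det(u_0, u_{n−1}) = 1. -/
/-! The SL2 relation on rows 0 and 1 says exactly that consecutive columns
`u j = (a 0 j, a 1 j)` have determinant 1, which also makes each `u j` primitive. Since the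
first coordinates are positive, the identity `det(u,w)·v₁ = det(u,v)·w₁ + det(v,w)·u₁` makes
positivity of determinants transitive, so `det(u i, u j) > 0` for all `i < j` follows from the
consecutive ones. Antiperiodicity gives `u n = -u 0`, turning `det(u (n-1), u n) = 1` into
`det(u 0, u (n-1)) = 1`. -/

lemma fdet_pos_trans {u v w : ℤ × ℤ} (hu : 0 < u.1) (hv : 0 < v.1) (hw : 0 < w.1)
    (huv : 0 < fdet u v) (hvw : 0 < fdet v w) : 0 < fdet u w := by
  have hcramer : fdet u w * v.1 = fdet u v * w.1 + fdet v w * u.1 := by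
    simp only [fdet]; ring
  have : 0 < fdet u w * v.1 := by rw [hcramer]; positivity
  exact pos_of_mul_pos_left this hv.le

lemma fdet_pos_of_fdet_succ_eq_one {n : ℕ} {v : ℕ → ℤ × ℤ} (hpos : ∀ i < n, 0 < (v i).1)
    (hstep : ∀ i, i + 1 < n → fdet (v i) (v (i + 1)) = 1) :
    ∀ i j, i < j → j < n → 0 < fdet (v i) (v j) := by
  intro i j hij
  induction j, hij using Nat.le_induction with
  | base => intro hn; rw [hstep i hn]; exact one_pos
  | succ k hik ih =>
    intro hkn
    exact fdet_pos_trans (hpos i (by omega)) (hpos k (by omega)) (hpos (k + 1) hkn) (ih (by omega))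
      (by rw [hstep k hkn]; exact one_pos)

lemma isPrimitive_of_fdet_eq_one {u v : ℤ × ℤ} (huv : fdet u v = 1) (hu : 0 < u.2) :
    IsPrimitive u := by
  refine ⟨?_, hu.le, fun h => absurd h hu.ne'⟩
  rw [← Int.isCoprime_iff_gcd_eq_one]
  exact ⟨v.2, -v.1, by simp only [fdet] at huv; linear_combination huv⟩

lemma IsSL2Tiling.fdet_eq_one {a : ℤ → ℤ → ℤ} (h : IsSL2Tiling a) (i j : ℤ) :
    fdet (a i j, a (i + 1) j) (a i (j + 1), a (i + 1) (j + 1)) = 1 := by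
  simp only [fdet]; linear_combination h i j

/-- The first two rows of an `(n,m)`-antiperiodic SL2-tiling with positive fundamental
rectangle form a Farey `n`-gon via `u j = (a 0 j, a 1 j)`. -/
theorem stmt13 (n m : ℕ) (hn : 3 ≤ n) (hm : 2 ≤ m) (a : ℤ → ℤ → ℤ)
    (hSL : IsSL2Tiling a) (hAp : IsAntiperiodic n m a) (hPos : HasPosRect n m a) :
    IsFareyPolygon n (fun j : ℕ => (a 0 (j : ℤ), a 1 (j : ℤ))) := by
  have hstep : ∀ j : ℕ, fdet (a 0 j, a 1 j) (a 0 (j + 1 : ℕ), a 1 (j + 1 : ℕ)) = 1 := by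
    intro j; push_cast; exact hSL.fdet_eq_one 0 j
  have hpos : ∀ i : ℤ, 0 ≤ i → i ≤ 1 → ∀ j : ℕ, j < n → 0 < a i j := fun i hi₀ hi₁ j hj =>
    hPos i j hi₀ (by omega) (by omega) (by omega)
  refine ⟨fun j hj => isPrimitive_of_fdet_eq_one (hstep j) (hpos 1 zero_le_one le_rfl j hj),
    fdet_pos_of_fdet_succ_eq_one (fun j hj => hpos 0 le_rfl zero_le_one j hj) fun j _ => hstep j,
    fun j _ => hstep j, ?_⟩
  have hwrap := hSL.fdet_eq_one 0 ((n : ℤ) - 1)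
  have hrow₀ := (hAp 0 0).1
  have hrow₁ := (hAp 1 0).1
  simp only [zero_add, sub_add_cancel] at hrow₀ hrow₁ hwrap
  rw [hrow₀, hrow₁] at hwrap
  simp only [fdet] at hwrap ⊢
  rw [Nat.cast_pred (by omega)]
  linear_combination hwrap
end

section
/- Well-definedness of the double recurrence generating SL2-tilings: for any sequences q, q' : ℤ → ℤ and any integers α, β, γ, δ, there exists a unique map T : ℤ×ℤ → ℤ such that T(0,0) = α, T(0,1) = β, T(1,0) = γ, T(1,1) = δ, and for all (i,j) ∈ ℤ²: T(i,j+1) = q(j)·T(i,j) − T(i,j−1) and T(i+1,j) = q'(i)·T(i,j) − T(i−1,j) (the two recurrences commute). -/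
/-!
A three-term recurrence `x (j + 1) = q j • x j - x (j - 1)` can be run both forwards and
backwards, so over any additive group its solutions on `ℤ` are determined freely by their
values at `0` and `1`. The solutions of the row recurrence form an additive group; solving the
column recurrence in that group, with the row solutions through `(α, β)` and `(γ, δ)` as
initial data, gives an array whose every row solves the row recurrence.
-/

namespace Int

theorem existsUnique_orbit {X : Type*} (e : ℤ → X ≃ X) (x₀ : X) :
    ∃! s : ℤ → X, s 0 = x₀ ∧ ∀ j, s (j + 1) = e j (s j) := by
  let s : ℤ → X := fun j =>
    j.inductionOn' 0 x₀ (fun k _ y => e k y) (fun k _ y => (e (k - 1)).symm y)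
  have start : s 0 = x₀ := inductionOn'_self
  have step : ∀ j, s (j + 1) = e j (s j) := by
    intro j
    rcases le_or_gt 0 j with hj | hj
    · exact inductionOn'_add_one hj
    · have h := inductionOn'_sub_one (motive := fun _ => X) (zero := x₀)
        (succ := fun k _ y => e k y) (pred := fun k _ y => (e (k - 1)).symm y)
        (show j + 1 ≤ 0 from hj)
      simp only [add_sub_cancel_right] at h
      change s j = (e j).symm (s (j + 1)) at h
      rw [h, Equiv.apply_symm_apply]
  refine ⟨s, ⟨start, step⟩, fun t ⟨ht0, ht⟩ => funext fun j => ?_⟩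
  induction j with
  | zero => rw [ht0, start]
  | succ i ih => rw [ht, step, ih]
  | pred i ih =>
    apply (e (-i - 1)).injective
    rw [← ht, ← step, sub_add_cancel, ih]

section ThreeTerm

variable {R M : Type*} [AddCommGroup M]

/-- Solutions of `x (j + 1) = q j • x j - x (j - 1)` are the orbits of these maps acting on the
states `(x j, x (j + 1))`. -/
def threeTermStep [SMul R M] (q : ℤ → R) (j : ℤ) : M × M ≃ M × M where
  toFun p := (p.2, q (j + 1) • p.2 - p.1)
  invFun p := (q (j + 1) • p.1 - p.2, p.1)
  left_inv p := by simp
  right_inv p := by simp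

theorem existsUnique_threeTerm_solution [SMul R M] (q : ℤ → R) (a b : M) :
    ∃! x : ℤ → M, x 0 = a ∧ x 1 = b ∧ ∀ j, x (j + 1) = q j • x j - x (j - 1) := by
  obtain ⟨s, ⟨hs0, hs⟩, hunique⟩ := existsUnique_orbit (threeTermStep q) (a, b)
  have fst_succ (j : ℤ) : (s (j + 1)).1 = (s j).2 := by rw [hs]; rfl
  have snd_succ (j : ℤ) : (s (j + 1)).2 = q (j + 1) • (s j).2 - (s j).1 := by rw [hs]; rfl
  refine ⟨fun j => (s j).1, ⟨by simp [hs0], by simpa [hs0] using fst_succ 0, ?_⟩, ?_⟩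
  · intro j
    beta_reduce
    rw [fst_succ, ← sub_add_cancel j 1, snd_succ, fst_succ, sub_add_cancel]
  · rintro y ⟨hy0, hy1, hy⟩
    have hys : (fun j => (y j, y (j + 1))) = s := by
      refine hunique _ ⟨by simp [hy0, hy1], fun j => ?_⟩
      simp [threeTermStep, hy (j + 1)]
    funext j
    exact congrArg Prod.fst (congrFun hys j)

variable [Monoid R] [DistribMulAction R M]

def threeTermSolutions (q : ℤ → R) : AddSubgroup (ℤ → M) where
  carrier := {x | ∀ j, x (j + 1) = q j • x j - x (j - 1)}
  zero_mem' j := by simp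
  add_mem' {x y} hx hy j := by
    simp only [Pi.add_apply, hx j, hy j, smul_add]
    abel
  neg_mem' {x} hx j := by
    simp only [Pi.neg_apply, hx j, smul_neg]
    abel

end ThreeTerm

end Int

/-- Well-definedness of the double recurrence generating SL2-tilings: for any
coefficient sequences `q, q' : ℤ → ℤ` and any initial `2×2` block `α, β, γ, δ`,
there is a unique doubly-indexed array `T : ℤ×ℤ → ℤ` with these initial values
satisfying the row recurrence `T i (j+1) = q j · T i j − T i (j-1)` and the column
recurrence `T (i+1) j = q' i · T i j − T (i-1) j`. -/
theorem stmt16 (q q' : ℤ → ℤ) (α β γ δ : ℤ) :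
    ∃! T : ℤ → ℤ → ℤ,
      T 0 0 = α ∧ T 0 1 = β ∧ T 1 0 = γ ∧ T 1 1 = δ ∧
      (∀ i j : ℤ, T i (j + 1) = q j * T i j - T i (j - 1)) ∧
      (∀ i j : ℤ, T (i + 1) j = q' i * T i j - T (i - 1) j) := by
  obtain ⟨R₀, ⟨hR₀0, hR₀1, hR₀⟩, uniq₀⟩ := Int.existsUnique_threeTerm_solution q α β
  obtain ⟨R₁, ⟨hR₁0, hR₁1, hR₁⟩, uniq₁⟩ := Int.existsUnique_threeTerm_solution q γ δ
  obtain ⟨F, ⟨hF0, hF1, hF⟩, uniqF⟩ :=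
    Int.existsUnique_threeTerm_solution (M := Int.threeTermSolutions q) q' ⟨R₀, hR₀⟩ ⟨R₁, hR₁⟩
  refine ⟨fun i => F i, ⟨?_, ?_, ?_, ?_, fun i => (F i).2, fun i j => ?_⟩, ?_⟩
  · simpa [hF0] using hR₀0
  · simpa [hF0] using hR₀1
  · simpa [hF1] using hR₁0
  · simpa [hF1] using hR₁1
  · simpa using congrFun (congrArg Subtype.val (hF i)) j
  · rintro T ⟨hT00, hT01, hT10, hT11, hrow, hcol⟩
    have hT0 : T 0 = R₀ := uniq₀ _ ⟨hT00, hT01, hrow 0⟩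
    have hT1 : T 1 = R₁ := uniq₁ _ ⟨hT10, hT11, hrow 1⟩
    have hTF : (fun i => ⟨T i, hrow i⟩ : ℤ → Int.threeTermSolutions q) = F :=
      uniqF _ ⟨Subtype.ext hT0, Subtype.ext hT1, fun i => Subtype.ext <| funext fun j => by
        simpa using hcol i j⟩
    funext i
    exact congrArg Subtype.val (congrFun hTF i)
end
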